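/- arXiv:2402.19234 — 2 statements merged into one kernel-verified Lean document; each statement's English description precedes it below -/
import Mathlib

section
/- For every independent broadcast f on the oriented circulant graph C⃗(2a;1,a) with a ≥ 2, the cost Σ_{v} f(v) is at most a. -/
/-!
Reduction mod `a` maps C⃗(2a;1,a) onto the directed `a`-cycle, and its kernel is `{0, a}`; so if
the image of `v` lies `r` steps ahead of the image of `u`, then `v = u + r` or `v = u + a + r`, and
`d(u, v) ≤ r + 1`. In particular every eccentricity is at most `a`. A broadcasting vertex `u`
therefore covers an arc of `f u ≤ a` vertices of the `a`-cycle starting at its image, and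
independence (`f u < d(u, v)`) makes these arcs pairwise disjoint, so the cost is at most `a`.
-/

/-- Arc relation of the oriented circulant graph C⃗(n;1,a): arcs u → u+1 and u → u+a (mod n). -/
def circArc (n : ℕ) (a : ℤ) (u v : ZMod n) : Prop :=
  v = u + 1 ∨ v = u + (a : ZMod n)

/-- There is a directed walk of length k from u to v in C⃗(n;1,a). -/
def circSteps (n : ℕ) (a : ℤ) (u v : ZMod n) (k : ℕ) : Prop :=
  ∃ g : ℕ → ZMod n, g 0 = u ∧ g k = v ∧ ∀ i < k, circArc n a (g i) (g (i + 1))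

/-- Directed distance: length of a shortest directed path from u to v. -/
noncomputable def circDist (n : ℕ) (a : ℤ) (u v : ZMod n) : ℕ :=
  sInf {k | circSteps n a u v k}

/-- Eccentricity of a vertex: maximum distance from it to any vertex. -/
noncomputable def circEcc (n : ℕ) (a : ℤ) (u : ZMod n) : ℕ :=
  sSup {d | ∃ v, d = circDist n a u v}

/-- Diameter: maximum eccentricity. -/
noncomputable def circDiam (n : ℕ) (a : ℤ) : ℕ :=
  sSup {d | ∃ u, d = circEcc n a u}

/-- f is an independent broadcast on C⃗(n;1,a). -/
def IsIndepBroadcast (n : ℕ) (a : ℤ) (f : ZMod n → ℕ) : Prop :=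
  (∀ v, f v ≤ circEcc n a v) ∧
  ∀ u v : ZMod n, u ≠ v → 0 < f u → 0 < f v → f u < circDist n a u v

/-- Cost of a broadcast: sum of its values over all vertices. -/
def circCost (n : ℕ) (f : ZMod n → ℕ) : ℕ :=
  ∑ i ∈ Finset.range n, f (i : ZMod n)

/-- The broadcast independence number of C⃗(n;1,a). -/
noncomputable def betaB (n : ℕ) (a : ℤ) : ℕ :=
  sSup {c | ∃ f : ZMod n → ℕ, IsIndepBroadcast n a f ∧ c = circCost n f}

lemma circSteps_add_natCast (n : ℕ) (b : ℤ) (u : ZMod n) (r : ℕ) :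
    circSteps n b u (u + r) r :=
  ⟨fun i => u + i, by simp, rfl, fun i _ => Or.inl (by push_cast; ring)⟩

lemma circSteps_add_intCast_add_natCast (n : ℕ) (b : ℤ) (u : ZMod n) (r : ℕ) :
    circSteps n b u (u + b + r) (r + 1) := by
  refine ⟨fun i => if i = 0 then u else u + b + (i - 1 : ℕ), by simp, by simp, fun i _ => ?_⟩
  rcases i with _ | i
  · exact Or.inr (by simp)
  · exact Or.inl (by simp only [Nat.add_one_ne_zero, if_false, Nat.add_sub_cancel]; push_cast; ring)

lemma circDist_le_of_circSteps {n : ℕ} {b : ℤ} {u v : ZMod n} {k : ℕ}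
    (h : circSteps n b u v k) : circDist n b u v ≤ k :=
  Nat.sInf_le h

section HalfCirculant

variable {a : ℕ}

abbrev toCycle (a : ℕ) : ZMod (2 * a) →+* ZMod a :=
  ZMod.castHom (dvd_mul_left a 2) (ZMod a)

lemma eq_zero_or_eq_of_toCycle_eq_zero [NeZero a] {x : ZMod (2 * a)} (hx : toCycle a x = 0) :
    x = 0 ∨ x = a := by
  rw [← ZMod.natCast_zmod_val x, map_natCast, ZMod.natCast_eq_zero_iff] at hx
  obtain ⟨c, hc⟩ := hx
  have hlt : a * c < a * 2 := by rw [← hc, mul_comm a 2]; exact ZMod.val_lt x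
  have hc2 : c < 2 := Nat.lt_of_mul_lt_mul_left hlt
  rw [← ZMod.natCast_zmod_val x, hc]
  interval_cases c <;> simp

lemma circDist_le_of_toCycle_eq [NeZero a] {u v : ZMod (2 * a)} {r : ℕ}
    (h : toCycle a v = toCycle a u + r) : circDist (2 * a) a u v ≤ r + 1 := by
  have hker : toCycle a (v - u - r) = 0 := by rw [map_sub, map_sub, h, map_natCast]; ring
  rcases eq_zero_or_eq_of_toCycle_eq_zero hker with hx | hx
  · rw [sub_eq_zero, sub_eq_iff_eq_add'] at hx
    rw [hx]
    exact (circDist_le_of_circSteps (circSteps_add_natCast _ _ u r)).trans (Nat.le_succ r)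
  · rw [sub_eq_iff_eq_add, sub_eq_iff_eq_add'] at hx
    rw [hx, ← add_assoc]
    exact_mod_cast circDist_le_of_circSteps (circSteps_add_intCast_add_natCast _ (a : ℤ) u r)

lemma circEcc_le [NeZero a] (u : ZMod (2 * a)) : circEcc (2 * a) a u ≤ a := by
  refine csSup_le ⟨_, u, rfl⟩ ?_
  rintro _ ⟨v, rfl⟩
  have h : toCycle a v = toCycle a u + (toCycle a v - toCycle a u).val := by simp
  exact (circDist_le_of_toCycle_eq h).trans (ZMod.val_lt _)

def cycleArc (f : ZMod (2 * a) → ℕ) (u : ZMod (2 * a)) : Finset (ZMod a) :=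
  (Finset.range (f u)).image fun i : ℕ => toCycle a u + (i : ZMod a)

lemma card_cycleArc {f : ZMod (2 * a) → ℕ} {u : ZMod (2 * a)} (hu : f u ≤ a) :
    (cycleArc f u).card = f u := by
  rw [cycleArc, Finset.card_image_of_injOn, Finset.card_range]
  intro i hi j hj h
  have hij : (i : ZMod a) = j := add_left_cancel h
  rw [Finset.coe_range, Set.mem_Iio] at hi hj
  rwa [ZMod.natCast_eq_natCast_iff', Nat.mod_eq_of_lt (hi.trans_le hu),
    Nat.mod_eq_of_lt (hj.trans_le hu)] at hij

lemma toCycle_add_ne_of_le [NeZero a] {f : ZMod (2 * a) → ℕ} (hf : IsIndepBroadcast (2 * a) a f)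
    {u v : ZMod (2 * a)} (huv : u ≠ v) (hv : 0 < f v) {i j : ℕ} (hi : i < f u) (hji : j ≤ i) :
    toCycle a u + i ≠ toCycle a v + j := by
  intro h
  have hv' : toCycle a v = toCycle a u + (i - j : ℕ) := by
    rw [Nat.cast_sub hji]; linear_combination h.symm
  have hlt := hf.2 u v huv (by omega) hv
  have hle := circDist_le_of_toCycle_eq hv'
  omega

lemma disjoint_cycleArc [NeZero a] {f : ZMod (2 * a) → ℕ} (hf : IsIndepBroadcast (2 * a) a f)
    {u v : ZMod (2 * a)} (huv : u ≠ v) : Disjoint (cycleArc f u) (cycleArc f v) := by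
  simp only [cycleArc, Finset.disjoint_left, Finset.mem_image, Finset.mem_range]
  rintro _ ⟨i, hi, rfl⟩ ⟨j, hj, h⟩
  rcases le_total j i with hji | hij
  · exact toCycle_add_ne_of_le hf huv (by omega) hi hji h.symm
  · exact toCycle_add_ne_of_le hf huv.symm (by omega) hj hij h

end HalfCirculant

lemma circCost_eq_sum (n : ℕ) [NeZero n] (f : ZMod n → ℕ) : circCost n f = ∑ v, f v :=
  Finset.sum_nbij' (fun i => i) ZMod.val (fun _ _ => Finset.mem_univ _)
    (fun v _ => Finset.mem_range.mpr v.val_lt)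
    (fun _ hi => ZMod.val_cast_of_lt (Finset.mem_range.mp hi))
    (fun v _ => ZMod.natCast_zmod_val v) (fun _ _ => rfl)

theorem stmt2 (a : ℕ) (ha : 2 ≤ a) (f : ZMod (2 * a) → ℕ)
    (hf : IsIndepBroadcast (2 * a) (a : ℤ) f) :
    circCost (2 * a) f ≤ a := by
  have : NeZero a := ⟨by omega⟩
  calc circCost (2 * a) f = ∑ u, (cycleArc f u).card := by
        rw [circCost_eq_sum]
        exact Finset.sum_congr rfl fun u _ => (card_cycleArc ((hf.1 u).trans (circEcc_le u))).symm
    _ = (Finset.univ.biUnion (cycleArc f)).card :=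
        (Finset.card_biUnion fun u _ v _ huv => disjoint_cycleArc hf huv).symm
    _ ≤ a := (Finset.card_le_univ _).trans (ZMod.card a).le
end

section
/- If n = 3a-1 and a ≥ 4, then the broadcast independence number of the oriented circulant graph C⃗(n;1,a) equals ⌊n/2⌋. -/
/-!
Since `3 a ≡ 1 (mod n)`, the map `v ↦ 3 v` carries the arcs `+1, +a` to `+3, +1`, so the distance
from `u` to `v` is `⌊r / 3⌋ + r mod 3` with `r = 3 (v - u)`, and every eccentricity is `⌈n / 3⌉`.
In an independent broadcast `f` each broadcasting vertex `u` is followed on the cycle by `f u`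
silent vertices, and, after multiplying by `3`, by `3 f u - 2` silent vertices. These two packings
give `∑ (f u + 1) ≤ n` and `∑ (3 f u - 1) ≤ n`, so the cost is at most `n / 2`. Conversely,
broadcasting with strength `1` from every other vertex (in the tripled coordinates) reaches `n / 2`.
-/

open Finset

section Walks

variable {n : ℕ} {a : ℤ}

theorem circSteps_iff (u v : ZMod n) (k : ℕ) :
    circSteps n a u v k ↔ ∃ x y : ℕ, x + y = k ∧ v = u + x + y * a := by
  constructor
  · rintro ⟨g, hg0, hgk, harc⟩
    induction k generalizing v with
    | zero => exact ⟨0, 0, rfl, by simp [← hgk, hg0]⟩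
    | succ k ih =>
      obtain ⟨x, y, hxy, hg⟩ := ih (g k) rfl fun i hi => harc i (by omega)
      rcases harc k (by omega) with h | h
      · exact ⟨x + 1, y, by omega, by rw [← hgk, h, hg]; push_cast; ring⟩
      · exact ⟨x, y + 1, by omega, by rw [← hgk, h, hg]; push_cast; ring⟩
  · rintro ⟨x, y, rfl, rfl⟩
    refine ⟨fun i => u + (min i x : ℕ) + (i - x : ℕ) * a, by simp, by simp, fun i hi => ?_⟩
    by_cases h : i < x
    · left
      simp only [show min (i + 1) x = min i x + 1 by omega, show i + 1 - x = i - x by omega]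
      push_cast; ring
    · right
      simp only [show min (i + 1) x = min i x by omega, show i + 1 - x = i - x + 1 by omega]
      push_cast; ring

theorem circDist_le {u v : ZMod n} {x y : ℕ} (h : v = u + x + y * a) :
    circDist n a u v ≤ x + y :=
  Nat.sInf_le ((circSteps_iff u v _).2 ⟨x, y, rfl, h⟩)

theorem circDist_le_val [NeZero n] (u v : ZMod n) : circDist n a u v ≤ (v - u).val :=
  (circDist_le (x := (v - u).val) (y := 0) (by simp)).trans_eq (add_zero _)

theorem exists_eq_circDist [NeZero n] (u v : ZMod n) :
    ∃ x y : ℕ, x + y = circDist n a u v ∧ v = u + x + y * a :=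
  (circSteps_iff u v _).1 <| Nat.sInf_mem (s := {k | circSteps n a u v k})
    ⟨(v - u).val, (circSteps_iff u v _).2 ⟨(v - u).val, 0, rfl, by simp⟩⟩

end Walks

section ThreeInverse

variable {n : ℕ} {a : ℤ}

theorem mod_three_ne_zero_of_three_mul_eq_one (h3 : 3 * (a : ZMod n) = 1) : n % 3 ≠ 0 := by
  intro hn
  have hcop : Nat.Coprime 3 n :=
    (ZMod.isUnit_iff_coprime 3 n).1 (by exact_mod_cast IsUnit.of_mul_eq_one _ h3)
  exact absurd (hcop.eq_one_of_dvd (Nat.dvd_of_mod_eq_zero hn)) (by norm_num)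

theorem circDist_eq [NeZero n] (h3 : 3 * (a : ZMod n) = 1) (u v : ZMod n) :
    circDist n a u v = (3 * (v - u)).val / 3 + (3 * (v - u)).val % 3 := by
  set r := (3 * (v - u)).val
  have hr : ((r : ℕ) : ZMod n) = 3 * (v - u) := ZMod.natCast_zmod_val _
  apply le_antisymm
  · apply circDist_le
    have hdiv : ((r : ℕ) : ZMod n) = 3 * ((r / 3 : ℕ) : ZMod n) + ((r % 3 : ℕ) : ZMod n) := by
      exact_mod_cast congrArg (Nat.cast (R := ZMod n)) (Nat.div_add_mod r 3).symm
    linear_combination -(a : ZMod n) * (hdiv.symm.trans hr) - (v - u - ((r / 3 : ℕ) : ZMod n)) * h3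
  · obtain ⟨x, y, hxy, hv⟩ := exists_eq_circDist (a := a) u v
    have hxy3 : ((3 * x + y : ℕ) : ZMod n) = 3 * (v - u) := by
      rw [hv]; push_cast; linear_combination -(y : ZMod n) * h3
    have hrxy : r = (3 * x + y) % n := by rw [← ZMod.val_natCast, hxy3]
    have hn3 := mod_three_ne_zero_of_three_mul_eq_one h3
    have hrn : r < n := ZMod.val_lt _
    rcases lt_or_ge (3 * x + y) n with h | h
    · rw [Nat.mod_eq_of_lt h] at hrxy; omega
    · omega

theorem circEcc_eq (h3 : 3 * (a : ZMod n) = 1) (hn : 2 ≤ n) (u : ZMod n) :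
    circEcc n a u = (n + 2) / 3 := by
  have : NeZero n := ⟨by omega⟩
  have hn3 := mod_three_ne_zero_of_three_mul_eq_one h3
  refine IsGreatest.csSup_eq ⟨?_, ?_⟩
  · obtain ⟨r, hr⟩ : ∃ r, r = n + n % 3 - 3 := ⟨_, rfl⟩
    refine ⟨u + (r : ZMod n) * a, ?_⟩
    have hv : 3 * (u + (r : ZMod n) * a - u) = (r : ZMod n) := by
      linear_combination (r : ZMod n) * h3
    rw [circDist_eq h3, hv, ZMod.val_cast_of_lt (by omega)]
    rcases (by omega : n % 3 = 1 ∨ n % 3 = 2) with h | h <;> omega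
  · rintro _ ⟨v, rfl⟩
    have := ZMod.val_lt (3 * (v - u))
    rw [circDist_eq h3]
    omega

end ThreeInverse

section Packing

variable {n : ℕ}

theorem val_sub_eq_of_add_eq {x y : ZMod n} {k l : ℕ} (h : x + k = y + l) (hlk : l ≤ k)
    (hk : k < n) : (y - x).val = k - l := by
  have hyx : y - x = ((k - l : ℕ) : ZMod n) := by
    rw [Nat.cast_sub hlk]; linear_combination -h
  rw [hyx, ZMod.val_cast_of_lt (by omega)]

theorem ZMod.val_sub_add_val_eq [NeZero n] (x y : ZMod n) :
    (y - x).val + x.val = y.val ∨ (y - x).val + x.val = y.val + n := by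
  by_cases h : n ≤ (y - x).val + x.val
  · right; rw [ZMod.val_add_val_of_le h, sub_add_cancel]
  · left; rw [← ZMod.val_add_of_lt (not_le.1 h), sub_add_cancel]

/-- The arcs `[p i, p i + w i)` of the cycle `ZMod n` are pairwise disjoint. -/
theorem sum_le_of_le_val_sub [NeZero n] {ι : Type*} (S : Finset ι) (p : ι → ZMod n) (w : ι → ℕ)
    (hw : ∀ i ∈ S, w i ≤ n) (hgap : ∀ i ∈ S, ∀ j ∈ S, i ≠ j → w i ≤ (p j - p i).val) :
    ∑ i ∈ S, w i ≤ n := by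
  have hinj : Set.InjOn (fun x : (_ : ι) × ℕ => p x.1 + x.2) (S.sigma fun i => range (w i)) := by
    rintro ⟨i, k⟩ hik ⟨j, l⟩ hjl (heq : p i + k = p j + l)
    simp only [coe_sigma, Set.mem_sigma_iff, mem_coe, mem_range] at hik hjl
    by_cases hij : i = j
    · subst hij
      have hkl : (k : ZMod n) = l := add_left_cancel heq
      have hk := hw i hik.1
      rw [← ZMod.val_cast_of_lt (n := n) (a := k) (by omega),
        ← ZMod.val_cast_of_lt (n := n) (a := l) (by omega), hkl]
    · rcases le_total l k with hlk | hkl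
      · have := hgap i hik.1 j hjl.1 hij
        rw [val_sub_eq_of_add_eq heq hlk (by linarith [hw i hik.1])] at this
        omega
      · have := hgap j hjl.1 i hik.1 (Ne.symm hij)
        rw [val_sub_eq_of_add_eq heq.symm hkl (by linarith [hw j hjl.1])] at this
        omega
  calc ∑ i ∈ S, w i = (S.sigma fun i => range (w i)).card := by simp [card_sigma]
    _ ≤ (univ : Finset (ZMod n)).card :=
      card_le_card_of_injOn _ (fun _ _ => mem_coe.2 (mem_univ _)) hinj
    _ = n := by simp

theorem sum_univ_comp_val {M : Type*} [AddCommMonoid M] [NeZero n] (g : ℕ → M) :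
    ∑ x : ZMod n, g x.val = ∑ p ∈ range n, g p :=
  sum_nbij ZMod.val (fun x _ => mem_range.2 (ZMod.val_lt x)) (ZMod.val_injective n).injOn
    (fun p hp => ⟨p, mem_univ _, ZMod.val_cast_of_lt (mem_range.1 hp)⟩) fun _ _ => rfl

theorem circCost_eq_sum_univ [NeZero n] (f : ZMod n → ℕ) : circCost n f = ∑ v, f v := by
  simp only [circCost, ← sum_univ_comp_val, ZMod.natCast_zmod_val]

end Packing

theorem circCost_le_half {n : ℕ} {a : ℤ} (h3 : 3 * (a : ZMod n) = 1) (hn : n % 3 = 2)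
    (f : ZMod n → ℕ) (hf : IsIndepBroadcast n a f) : circCost n f ≤ n / 2 := by
  have : NeZero n := ⟨by omega⟩
  set S := univ.filter (fun v => 0 < f v)
  have hecc : ∀ v, f v ≤ (n + 2) / 3 := fun v => (hf.1 v).trans (circEcc_eq h3 (by omega) v).le
  have hfar : ∀ u ∈ S, ∀ v ∈ S, u ≠ v → f u < circDist n a u v := fun u hu v hv huv =>
    hf.2 u v huv (mem_filter.1 hu).2 (mem_filter.1 hv).2
  have hI : ∑ u ∈ S, (f u + 1) ≤ n :=
    sum_le_of_le_val_sub S id _ (fun u _ => by have := hecc u; omega)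
      fun u hu v hv huv => (hfar u hu v hv huv).trans_le (circDist_le_val u v)
  have hJ : ∑ u ∈ S, (3 * f u - 1) ≤ n :=
    sum_le_of_le_val_sub S (3 * ·) _ (fun u _ => by have := hecc u; omega)
      fun u hu v hv huv => by
        have := hfar u hu v hv huv
        rw [circDist_eq h3, mul_sub] at this
        omega
  have hsum : ∑ u ∈ S, (f u + 1) + ∑ u ∈ S, (3 * f u - 1) = 4 * ∑ u ∈ S, f u := by
    rw [← sum_add_distrib, mul_sum]
    exact sum_congr rfl fun u hu => by have := (mem_filter.1 hu).2; omega
  have hcost : circCost n f = ∑ u ∈ S, f u := by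
    rw [circCost_eq_sum_univ, sum_filter_of_ne fun v _ hv => Nat.pos_of_ne_zero hv]
  omega

section LowerBound

variable {n : ℕ} {a : ℤ}

/-- `g` prescribes the strength at position `(3 * v).val`, where the arcs become `+1, +3`;
`r` is the forward gap from position `p` to position `q`. -/
theorem isIndepBroadcast_comp_three_mul (h3 : 3 * (a : ZMod n) = 1) (hn : 2 ≤ n) (g : ℕ → ℕ)
    (hecc : ∀ p < n, g p ≤ (n + 2) / 3)
    (hgap : ∀ p q r, p < n → q < n → (r + p = q ∨ r + p = q + n) → p ≠ q → 0 < g p → 0 < g q →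
      g p < r / 3 + r % 3) :
    IsIndepBroadcast n a (fun v => g (3 * v).val) := by
  have : NeZero n := ⟨by omega⟩
  refine ⟨fun v => (circEcc_eq h3 hn v).symm ▸ hecc _ (ZMod.val_lt _), fun u v huv hu hv => ?_⟩
  have h3uv : 3 * u ≠ 3 * v := fun h => huv (by linear_combination (a : ZMod n) * h - (u - v) * h3)
  rw [circDist_eq h3, mul_sub]
  exact hgap _ _ _ (ZMod.val_lt _) (ZMod.val_lt _) (ZMod.val_sub_add_val_eq _ _)
    (fun h => h3uv (ZMod.val_injective n h)) hu hv

theorem circCost_comp_three_mul [NeZero n] (h3 : 3 * (a : ZMod n) = 1) (g : ℕ → ℕ) :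
    circCost n (fun v => g (3 * v).val) = ∑ p ∈ range n, g p := by
  rw [circCost_eq_sum_univ, ← sum_univ_comp_val]
  exact Equiv.sum_comp (Units.mulLeft (Units.mkOfMulEqOne 3 (a : ZMod n) h3)) (fun x => g x.val)

def evenBelow (m p : ℕ) : ℕ := if p % 2 = 0 ∧ p < m then 1 else 0

theorem sum_range_evenBelow (m N : ℕ) : ∑ p ∈ range N, evenBelow m p = (min N m + 1) / 2 := by
  induction N with
  | zero => simp
  | succ N ih => rw [sum_range_succ, ih]; unfold evenBelow; split_ifs <;> omega

/-- For odd `n`, position `n - 5` broadcasts with strength `2` next to `0, 2, …, n - 7` with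
strength `1`: its forward gaps `5, 7, 9, …` to them are all at distance at least `3`. -/
theorem exists_isIndepBroadcast_half_le (h3 : 3 * (a : ZMod n) = 1) (hn : 5 ≤ n) :
    ∃ f, IsIndepBroadcast n a f ∧ n / 2 ≤ circCost n f := by
  have : NeZero n := ⟨by omega⟩
  rcases Nat.even_or_odd n with ⟨k, hk⟩ | ⟨k, hk⟩
  · refine ⟨_, isIndepBroadcast_comp_three_mul h3 (by omega) (evenBelow n) ?_ ?_, ?_⟩
    · intro p _; unfold evenBelow; split_ifs <;> omega
    · intro p q r _ _ hr _ hp hq; unfold evenBelow at *; split_ifs at * <;> omega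
    · rw [circCost_comp_three_mul h3, sum_range_evenBelow]; omega
  · refine ⟨_, isIndepBroadcast_comp_three_mul h3 (by omega)
      (fun p => evenBelow (n - 5) p + if p = n - 5 then 2 else 0) ?_ ?_, ?_⟩
    · intro p _; unfold evenBelow; split_ifs <;> omega
    · intro p q r _ _ hr _ hp hq; unfold evenBelow at *; split_ifs at * <;> omega
    · have hcost := circCost_comp_three_mul h3
        (fun p => evenBelow (n - 5) p + if p = n - 5 then 2 else 0)
      rw [sum_add_distrib, sum_range_evenBelow, sum_ite_eq',
        if_pos (mem_range.2 (by omega))] at hcost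
      omega

end LowerBound

theorem betaB_eq_of_le_of_exists {n m : ℕ} {a : ℤ}
    (hle : ∀ f, IsIndepBroadcast n a f → circCost n f ≤ m)
    (hex : ∃ f, IsIndepBroadcast n a f ∧ m ≤ circCost n f) : betaB n a = m := by
  obtain ⟨f, hf, hm⟩ := hex
  exact IsGreatest.csSup_eq
    ⟨⟨f, hf, hm.antisymm (hle f hf)⟩, by rintro _ ⟨g, hg, rfl⟩; exact hle g hg⟩

theorem stmt3 (n a : ℕ) (ha : 4 ≤ a) (hn : n = 3 * a - 1) :
    betaB n (a : ℤ) = n / 2 := by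
  have h3 : 3 * ((a : ℤ) : ZMod n) = 1 := by
    have : ((3 * a : ℕ) : ZMod n) = ((n + 1 : ℕ) : ZMod n) := by congr 1; omega
    simpa using this
  exact betaB_eq_of_le_of_exists (fun f hf => circCost_le_half h3 (by omega) f hf)
    (exists_isIndepBroadcast_half_le h3 (by omega))
end
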